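/- For all quaternions e, x ∈ ℍ, the HR-QLMS update term Δ = ½ e x* − ¼ x e* decomposes as: re(Δ) = ¼ re(e) re(x) − ¼ re(e · Im(x)) and Im(Δ) = ¾ re(x) Im(e) − ¾ Im(e · Im(x)), i.e., the HR-QLMS update has weighting coefficients a = b = ¼ and c = d = ¾ in the generic decomposition re(Δ) = a re(e · re(x)) − b re(e · Im(x)), Im(Δ) = c Im(e · re(x)) − d Im(e · Im(x)). -/

import Mathlib

open scoped Quaternion

/-- The vector (imaginary) part of a quaternion: `q` minus its real (scalar) part. -/
def qIm (q : ℍ[ℝ]) : ℍ[ℝ] := q - (q.re : ℍ[ℝ])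

/-! Writing `p = e x*`, the second term is `x e* = p*`, so `Δ = ½ p − ¼ p*`: its scalar part
is `¼ re p` and its vector part `¾ Im p`. Splitting `x* = re x − Im x` gives
`p = re x · e − e · Im x`, which yields both components. -/

theorem qIm_eq_im (q : ℍ[ℝ]) : qIm q = q.im :=
  Quaternion.sub_re_self q

namespace Quaternion

theorem star_eq_re_sub_im (q : ℍ[ℝ]) : star q = q.re - q.im := by
  ext <;> simp

theorem re_smul_sub_smul_star (a b : ℝ) (p : ℍ[ℝ]) :
    (a • p - b • star p).re = (a - b) * p.re := by
  simp only [re_sub, re_smul, re_star, smul_eq_mul]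
  ring

theorem im_smul_sub_smul_star (a b : ℝ) (p : ℍ[ℝ]) :
    (a • p - b • star p).im = (a + b) • p.im := by
  rw [im_sub, im_smul, im_smul, im_star, smul_neg, sub_neg_eq_add, add_smul]

theorem mul_star_eq_re_smul_sub_mul_im (e x : ℍ[ℝ]) : e * star x = x.re • e - e * x.im := by
  rw [star_eq_re_sub_im, mul_sub, mul_coe_eq_smul]

end Quaternion

theorem HR_QLMS_update_decomposition (e x : ℍ[ℝ])
    (Δ : ℍ[ℝ])
    (hΔ : Δ = (1 / 2 : ℝ) • (e * star x) - (1 / 4 : ℝ) • (x * star e)) :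
    Δ.re = (1 / 4 : ℝ) * e.re * x.re - (1 / 4 : ℝ) * (e * qIm x).re ∧
    qIm Δ = ((3 / 4 : ℝ) * x.re) • qIm e - (3 / 4 : ℝ) • qIm (e * qIm x) := by
  have hstar : x * star e = star (e * star x) := by rw [star_mul, star_star]
  rw [hstar] at hΔ
  simp only [qIm_eq_im]
  constructor
  · rw [hΔ, Quaternion.re_smul_sub_smul_star, Quaternion.mul_star_eq_re_smul_sub_mul_im,
      Quaternion.re_sub, Quaternion.re_smul, smul_eq_mul]
    ring
  · rw [hΔ, Quaternion.im_smul_sub_smul_star, Quaternion.mul_star_eq_re_smul_sub_mul_im,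
      Quaternion.im_sub, Quaternion.im_smul, smul_sub, smul_smul]
    norm_num
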